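/- Let Q₁ and Q₂ be quadratic polynomials on ℝⁿ both satisfying the interpolation conditions Q(yᵢ) = fᵢ for i = 1,…,m, and suppose H₀ is symmetric. If Q₁ minimizes ‖∇²Q − H₀‖_F² among feasible quadratics, then ‖∇²Q₂ − H₀‖_F² = ‖∇²Q₁ − H₀‖_F² + ‖∇²Q₂ − ∇²Q₁‖_F² (a Pythagorean identity). -/

import Mathlib

/-!
The Frobenius norm is the Euclidean norm of the flattened matrix. Interpolation conditions are
affine in `(c, g, H)`, so every point `Q₁ + t (Q₂ - Q₁)` of the line through two feasible
quadratics is feasible. Minimality of `‖H₁ - H₀‖` along that line makes `H₁ - H₀` orthogonal to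
`H₂ - H₁`, and the identity is Pythagoras' theorem.
-/

open Matrix

/-- Squared Frobenius norm of a real matrix. -/
def frobSq {n : ℕ} (A : Matrix (Fin n) (Fin n) ℝ) : ℝ := ∑ i, ∑ j, (A i j) ^ 2

/-- A quadratic `q = (c, g, H)` (value `c + gᵀx + ½ xᵀHx`, `H` symmetric)
interpolates the data `(y i, f i)`. -/
def IsFeasQuad {n m : ℕ} (y : Fin m → Fin n → ℝ) (f : Fin m → ℝ)
    (c : ℝ) (g : Fin n → ℝ) (H : Matrix (Fin n) (Fin n) ℝ) : Prop :=
  Hᵀ = H ∧ ∀ i, c + g ⬝ᵥ y i + (1 / 2) * (y i ⬝ᵥ H.mulVec (y i)) = f i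

section InnerProductSpace

open scoped RealInnerProductSpace

variable {E : Type*} [NormedAddCommGroup E] [InnerProductSpace ℝ E]

theorem real_inner_eq_zero_of_forall_norm_le_norm_add_smul {a d : E}
    (h : ∀ t : ℝ, ‖a‖ ≤ ‖a + t • d‖) : ⟪a, d⟫ = 0 := by
  have hquad : ∀ t : ℝ, 0 ≤ ‖d‖ ^ 2 * (t * t) + 2 * ⟪a, d⟫ * t + 0 := by
    intro t
    have hsq := pow_le_pow_left₀ (norm_nonneg a) (h t) 2
    rw [norm_add_sq_real, norm_smul, real_inner_smul_right, Real.norm_eq_abs, mul_pow,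
      sq_abs] at hsq
    linarith
  have hdiscr := discrim_le_zero hquad
  rw [discrim] at hdiscr
  nlinarith [sq_nonneg ⟪a, d⟫]

theorem norm_sub_sq_eq_of_forall_norm_sub_le {x₀ x₁ x₂ : E}
    (h : ∀ t : ℝ, ‖x₁ - x₀‖ ≤ ‖x₁ + t • (x₂ - x₁) - x₀‖) :
    ‖x₂ - x₀‖ ^ 2 = ‖x₁ - x₀‖ ^ 2 + ‖x₂ - x₁‖ ^ 2 := by
  have horth : ⟪x₁ - x₀, x₂ - x₁⟫ = 0 :=
    real_inner_eq_zero_of_forall_norm_le_norm_add_smul fun t => by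
      simpa only [add_sub_right_comm] using h t
  rw [← sub_add_sub_cancel x₂ x₁ x₀, add_comm, norm_add_sq_real, horth]
  ring

end InnerProductSpace

def Matrix.flattenₗ (ι κ : Type*) :
    Matrix ι κ ℝ ≃ₗ[ℝ] EuclideanSpace ℝ (ι × κ) :=
  (LinearEquiv.curry ℝ ℝ ι κ).symm.trans (WithLp.linearEquiv 2 ℝ (ι × κ → ℝ)).symm

theorem frobSq_eq_norm_flattenₗ_sq {n : ℕ} (A : Matrix (Fin n) (Fin n) ℝ) :
    frobSq A = ‖Matrix.flattenₗ (Fin n) (Fin n) A‖ ^ 2 := by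
  rw [EuclideanSpace.real_norm_sq_eq, Fintype.sum_prod_type]
  rfl

theorem IsFeasQuad.add_smul_sub {n m : ℕ} {y : Fin m → Fin n → ℝ} {f : Fin m → ℝ}
    {c₁ c₂ : ℝ} {g₁ g₂ : Fin n → ℝ} {H₁ H₂ : Matrix (Fin n) (Fin n) ℝ}
    (hQ₁ : IsFeasQuad y f c₁ g₁ H₁) (hQ₂ : IsFeasQuad y f c₂ g₂ H₂) (t : ℝ) :
    IsFeasQuad y f (c₁ + t * (c₂ - c₁)) (g₁ + t • (g₂ - g₁)) (H₁ + t • (H₂ - H₁)) := by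
  refine ⟨by simp [hQ₁.1, hQ₂.1], fun i => ?_⟩
  simp only [add_dotProduct, smul_dotProduct, sub_dotProduct, add_mulVec, smul_mulVec,
    sub_mulVec, dotProduct_add, dotProduct_smul, dotProduct_sub, smul_eq_mul]
  linear_combination (1 - t) * hQ₁.2 i + t * hQ₂.2 i

theorem least_frobenius_pythagoras_general (n m : ℕ)
    (y : Fin m → Fin n → ℝ) (f : Fin m → ℝ)
    (H₀ : Matrix (Fin n) (Fin n) ℝ)
    (c₁ c₂ : ℝ) (g₁ g₂ : Fin n → ℝ) (H₁ H₂ : Matrix (Fin n) (Fin n) ℝ)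
    (hQ₁ : IsFeasQuad y f c₁ g₁ H₁) (hQ₂ : IsFeasQuad y f c₂ g₂ H₂)
    (hmin : ∀ c' g' H', IsFeasQuad y f c' g' H' →
      frobSq (H₁ - H₀) ≤ frobSq (H' - H₀)) :
    frobSq (H₂ - H₀) = frobSq (H₁ - H₀) + frobSq (H₂ - H₁) := by
  simp only [frobSq_eq_norm_flattenₗ_sq, map_sub] at hmin ⊢
  refine norm_sub_sq_eq_of_forall_norm_sub_le fun t => ?_
  have hline := hmin _ _ _ (hQ₁.add_smul_sub hQ₂ t)
  rw [map_add, map_smul, map_sub] at hline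
  exact (sq_le_sq₀ (norm_nonneg _) (norm_nonneg _)).mp hline

/-- Pythagorean identity for the least Frobenius norm update: if `Q₁`
minimizes `‖∇²Q − H₀‖_F²` among feasible quadratics, then any feasible `Q₂`
satisfies `‖∇²Q₂ − H₀‖² = ‖∇²Q₁ − H₀‖² + ‖∇²Q₂ − ∇²Q₁‖²`. -/
theorem least_frobenius_pythagoras (n m : ℕ)
    (y : Fin m → Fin n → ℝ) (f : Fin m → ℝ)
    (H₀ : Matrix (Fin n) (Fin n) ℝ) (hH₀ : H₀ᵀ = H₀)
    (c₁ c₂ : ℝ) (g₁ g₂ : Fin n → ℝ) (H₁ H₂ : Matrix (Fin n) (Fin n) ℝ)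
    (hQ₁ : IsFeasQuad y f c₁ g₁ H₁) (hQ₂ : IsFeasQuad y f c₂ g₂ H₂)
    (hmin : ∀ c' g' H', IsFeasQuad y f c' g' H' →
      frobSq (H₁ - H₀) ≤ frobSq (H' - H₀)) :
    frobSq (H₂ - H₀) = frobSq (H₁ - H₀) + frobSq (H₂ - H₁) :=
  least_frobenius_pythagoras_general n m y f H₀ c₁ c₂ g₁ g₂ H₁ H₂ hQ₁ hQ₂ hmin
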